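/- Let u₀ < u₁ be real numbers, C a real constant, and ψ : ℝ → ℝ a twice continuously differentiable function with ψ(u) > 0 for all u in [u₀, u₁], satisfying ψ''(u) = 1/ψ(u) - C for all u in [u₀, u₁], together with the endpoint conditions ψ'(u₀) = 0, ψ'(u₁) = 0, and ψ''(u₀) = -ψ''(u₁). Then ψ(u₀) = ψ(u₁). -/

import Mathlib

/-!
Along a solution of `ψ'' = 1/ψ - C` the energy `(ψ')²/2 - log ψ + C ψ` is conserved. At the two
endpoints `ψ' = 0`, so `log ψ(u₀) - log ψ(u₁) = C (ψ(u₀) - ψ(u₁))`, while `ψ''(u₀) = -ψ''(u₁)` gives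
`2C = 1/ψ(u₀) + 1/ψ(u₁)`. Writing `t = log (ψ(u₀)/ψ(u₁))`, these combine to `sinh t = t`,
whence `t = 0`.
-/

open Real Set

theorem Real.sinh_eq_self_iff {x : ℝ} : sinh x = x ↔ x = 0 := by
  refine ⟨fun h => ?_, fun h => by simp [h]⟩
  rcases lt_trichotomy x 0 with hx | hx | hx
  · exact absurd h (sinh_lt_self_iff.2 hx).ne
  · exact hx
  · exact absurd h (self_lt_sinh_iff.2 hx).ne'

theorem Real.eq_of_log_sub_log_eq {a b : ℝ} (ha : 0 < a) (hb : 0 < b)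
    (h : log a - log b = (a⁻¹ + b⁻¹) / 2 * (a - b)) : a = b := by
  have hsinh : sinh (log (a / b)) = log (a / b) := by
    rw [sinh_log (div_pos ha hb), log_div ha.ne' hb.ne', h]
    field_simp
    ring
  have hlog : log (a / b) = 0 := sinh_eq_self_iff.1 hsinh
  rw [log_div ha.ne' hb.ne', sub_eq_zero] at hlog
  exact log_injOn_pos ha hb hlog

theorem energy_eq_of_deriv_deriv_eq {a b : ℝ} (hab : a ≤ b) {ψ V F : ℝ → ℝ}
    (hψ : ∀ x ∈ Icc a b, DifferentiableAt ℝ ψ x)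
    (hψ' : ∀ x ∈ Icc a b, DifferentiableAt ℝ (deriv ψ) x)
    (hV : ∀ x ∈ Icc a b, HasDerivAt V (F (ψ x)) (ψ x))
    (hode : ∀ x ∈ Icc a b, deriv (deriv ψ) x = -F (ψ x)) :
    deriv ψ b ^ 2 / 2 + V (ψ b) = deriv ψ a ^ 2 / 2 + V (ψ a) := by
  set E : ℝ → ℝ := fun x => deriv ψ x ^ 2 / 2 + V (ψ x)
  have hE : ∀ x ∈ Icc a b, HasDerivAt E 0 x := by
    intro x hx
    have hkin := ((hψ' x hx).hasDerivAt.pow 2).div_const 2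
    have hpot := (hV x hx).comp x (hψ x hx).hasDerivAt
    refine (hkin.add hpot).congr_deriv ?_
    rw [hode x hx]
    push_cast
    ring
  exact constant_of_has_deriv_right_zero
    (fun x hx => (hE x hx).continuousAt.continuousWithinAt)
    (fun x hx => (hE x (Ico_subset_Icc_self hx)).hasDerivWithinAt) b ⟨hab, le_rfl⟩

theorem hasDerivAt_mul_sub_log {C x : ℝ} (hx : x ≠ 0) :
    HasDerivAt (fun y => C * y - log y) (C - 1 / x) x := by
  refine (((hasDerivAt_id' x).const_mul C).sub (hasDerivAt_log hx)).congr_deriv ?_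
  rw [mul_one, one_div]

theorem endpoint_values_eq (u₀ u₁ C : ℝ) (hu : u₀ < u₁) (ψ : ℝ → ℝ)
    (hψ : ContDiff ℝ 2 ψ)
    (hpos : ∀ u ∈ Set.Icc u₀ u₁, 0 < ψ u)
    (hode : ∀ u ∈ Set.Icc u₀ u₁, deriv (deriv ψ) u = 1 / ψ u - C)
    (h0 : deriv ψ u₀ = 0) (h1 : deriv ψ u₁ = 0)
    (h2 : deriv (deriv ψ) u₀ = -deriv (deriv ψ) u₁) :
    ψ u₀ = ψ u₁ := by
  have hu₀ : u₀ ∈ Icc u₀ u₁ := left_mem_Icc.2 hu.le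
  have hu₁ : u₁ ∈ Icc u₀ u₁ := right_mem_Icc.2 hu.le
  have henergy := energy_eq_of_deriv_deriv_eq hu.le (V := fun y => C * y - log y)
    (F := fun y => C - 1 / y)
    (fun x _ => (hψ.differentiable two_ne_zero).differentiableAt)
    (fun x _ => hψ.differentiable_deriv_two.differentiableAt)
    (fun x hx => hasDerivAt_mul_sub_log (hpos x hx).ne')
    (fun x hx => by rw [hode x hx, neg_sub])
  have hC : 2 * C = (ψ u₀)⁻¹ + (ψ u₁)⁻¹ := by
    rw [hode u₀ hu₀, hode u₁ hu₁] at h2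
    simp only [one_div] at h2
    linarith
  refine eq_of_log_sub_log_eq (hpos u₀ hu₀) (hpos u₁ hu₁) ?_
  rw [← hC]
  rw [h0, h1] at henergy
  linarith
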